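/- Let λ_j, λ_m > 0 and let 0 < κ ≤ 1 be real numbers. Then ∫_{r=0}^{∞} ∫_{u=r}^{∞} 4(πλ_j)^2 · r · u · e^{−πλ_j u^2} · ( e^{−πλ_m κ^2 r^2} − e^{−πλ_m u^2} ) du dr = λ_m(2λ_j + λ_m)/(λ_j + λ_m)^2 − λ_m/(λ_m + λ_j κ^{−2}); equivalently, the left-hand side equals λ_j/(λ_j + κ^2 λ_m) − λ_j^2/(λ_j + λ_m)^2. (This is the closed form in Lemma 1 for Pr(X^{(j,m)}), j ≠ m, in the complementary regime κ = (t^{(m)}/t^{(j)})^{1/α} ≤ 1, where κ^{−2} = (t^{(j)}/t^{(m)})^{2/α}.) -/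

import Mathlib

/-!
Both integrations are elementary: `u ↦ u * exp (-(c * u ^ 2))` has the primitive
`-exp (-(c * u ^ 2)) / (2 * c)`, and the product `exp (-(a * u ^ 2)) * exp (-(b * u ^ 2))` is again
such a Gaussian. After the inner integration over `u > r` the integrand in `r` is a combination of
two terms `r * exp (-(c * r ^ 2))`, which integrate over `r > 0` to `1 / (2 * c)`. With `a = π λ_j`,
`b = π λ_m`, `c = π λ_m κ²` this gives `a / (a + c) - a² / (a + b)²`, and the factors `π` cancel.
-/

open MeasureTheory Real Set Filter Topology

theorem integrableOn_mul_exp_neg_mul_sq {c : ℝ} (hc : 0 < c) (s : Set ℝ) :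
    IntegrableOn (fun u : ℝ => u * exp (-(c * u ^ 2))) s := by
  simpa only [neg_mul] using (integrable_mul_exp_neg_mul_sq hc).integrableOn

theorem integral_Ioi_mul_exp_neg_mul_sq {c : ℝ} (hc : 0 < c) (r : ℝ) :
    ∫ u in Ioi r, u * exp (-(c * u ^ 2)) = exp (-(c * r ^ 2)) / (2 * c) := by
  have hderiv : ∀ u ∈ Ici r, HasDerivAt (fun u : ℝ => -exp (-(c * u ^ 2)) / (2 * c))
      (u * exp (-(c * u ^ 2))) u := fun u _ => by
    refine (((hasDerivAt_pow 2 u).const_mul c).fun_neg.exp.fun_neg.div_const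
      (2 * c)).congr_deriv ?_
    field_simp
    ring
  have hlim : Tendsto (fun u : ℝ => -exp (-(c * u ^ 2)) / (2 * c)) atTop (𝓝 0) := by
    have hexp : Tendsto (fun u : ℝ => exp (-(c * u ^ 2))) atTop (𝓝 0) :=
      tendsto_exp_atBot.comp
        (tendsto_neg_atTop_atBot.comp ((tendsto_pow_atTop two_ne_zero).const_mul_atTop hc))
    simpa using hexp.neg.div_const (2 * c)
  rw [integral_Ioi_of_hasDerivAt_of_tendsto' hderiv (integrableOn_mul_exp_neg_mul_sq hc _) hlim]
  ring

theorem integral_Ioi_nearestPair_inner {a b : ℝ} (ha : 0 < a) (hab : 0 < a + b)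
    (c r : ℝ) :
    ∫ u in Ioi r, 4 * a ^ 2 * r * u * exp (-(a * u ^ 2)) *
        (exp (-(c * r ^ 2)) - exp (-(b * u ^ 2)))
      = 2 * a * (r * exp (-((a + c) * r ^ 2)))
        - 2 * a ^ 2 / (a + b) * (r * exp (-((a + b) * r ^ 2))) := by
  have hsplit : ∀ u : ℝ, 4 * a ^ 2 * r * u * exp (-(a * u ^ 2)) *
        (exp (-(c * r ^ 2)) - exp (-(b * u ^ 2)))
      = 4 * a ^ 2 * r * exp (-(c * r ^ 2)) * (u * exp (-(a * u ^ 2)))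
        - 4 * a ^ 2 * r * (u * exp (-((a + b) * u ^ 2))) := fun u => by
    rw [add_mul, neg_add, exp_add]
    ring
  simp_rw [hsplit]
  rw [integral_sub ((integrableOn_mul_exp_neg_mul_sq ha _).const_mul _)
      ((integrableOn_mul_exp_neg_mul_sq hab _).const_mul _),
    integral_const_mul, integral_const_mul, integral_Ioi_mul_exp_neg_mul_sq ha,
    integral_Ioi_mul_exp_neg_mul_sq hab]
  simp only [add_mul, neg_add, exp_add]
  field_simp
  ring

theorem integral_Ioi_nearestPair {a b c : ℝ} (ha : 0 < a) (hab : 0 < a + b)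
    (hac : 0 < a + c) :
    ∫ r in Ioi (0 : ℝ), ∫ u in Ioi r, 4 * a ^ 2 * r * u * exp (-(a * u ^ 2)) *
        (exp (-(c * r ^ 2)) - exp (-(b * u ^ 2)))
      = a / (a + c) - a ^ 2 / (a + b) ^ 2 := by
  simp_rw [integral_Ioi_nearestPair_inner ha hab]
  rw [integral_sub ((integrableOn_mul_exp_neg_mul_sq hac _).const_mul _)
      ((integrableOn_mul_exp_neg_mul_sq hab _).const_mul _),
    integral_const_mul, integral_const_mul, integral_Ioi_mul_exp_neg_mul_sq hac,
    integral_Ioi_mul_exp_neg_mul_sq hab]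
  simp only [zero_pow two_ne_zero, mul_zero, neg_zero, exp_zero]
  field_simp

theorem stmt_1_general (lj lm κ : ℝ) (hlj : 0 < lj) (hlm : 0 < lm)
    (hκ0 : 0 < κ) :
    (∫ r in Ioi (0:ℝ), ∫ u in Ioi r,
      4 * (π * lj) ^ 2 * r * u * Real.exp (-(π * lj * u ^ 2)) *
        (Real.exp (-(π * lm * κ ^ 2 * r ^ 2)) - Real.exp (-(π * lm * u ^ 2))))
      = lm * (2 * lj + lm) / (lj + lm) ^ 2 - lm / (lm + lj * κ ^ (-2 : ℤ)) ∧
    (∫ r in Ioi (0:ℝ), ∫ u in Ioi r,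
      4 * (π * lj) ^ 2 * r * u * Real.exp (-(π * lj * u ^ 2)) *
        (Real.exp (-(π * lm * κ ^ 2 * r ^ 2)) - Real.exp (-(π * lm * u ^ 2))))
      = lj / (lj + κ ^ 2 * lm) - lj ^ 2 / (lj + lm) ^ 2 := by
  have hπ := pi_pos
  rw [integral_Ioi_nearestPair (by positivity) (by positivity) (by positivity)]
  have hκ2 : κ ^ (-2 : ℤ) = (κ ^ 2)⁻¹ := zpow_neg_coe_of_pos κ two_pos
  have hπl : π * lj / (π * lj + π * lm * κ ^ 2) - (π * lj) ^ 2 / (π * lj + π * lm) ^ 2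
      = lj / (lj + κ ^ 2 * lm) - lj ^ 2 / (lj + lm) ^ 2 := by
    field_simp
  rw [hπl, hκ2]
  refine ⟨?_, rfl⟩
  field_simp
  ring

/-- Lemma 1 (case j ≠ m, κ = (t⁽ᵐ⁾/t⁽ʲ⁾)^{1/α} ≤ 1): closed form of
Pr(X^{(j,m)}) as an explicit double integral, in its two equivalent forms. -/
theorem stmt_1 (lj lm κ : ℝ) (hlj : 0 < lj) (hlm : 0 < lm)
    (hκ0 : 0 < κ) (hκ : κ ≤ 1) :
    (∫ r in Ioi (0:ℝ), ∫ u in Ioi r,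
      4 * (π * lj) ^ 2 * r * u * Real.exp (-(π * lj * u ^ 2)) *
        (Real.exp (-(π * lm * κ ^ 2 * r ^ 2)) - Real.exp (-(π * lm * u ^ 2))))
      = lm * (2 * lj + lm) / (lj + lm) ^ 2 - lm / (lm + lj * κ ^ (-2 : ℤ)) ∧
    (∫ r in Ioi (0:ℝ), ∫ u in Ioi r,
      4 * (π * lj) ^ 2 * r * u * Real.exp (-(π * lj * u ^ 2)) *
        (Real.exp (-(π * lm * κ ^ 2 * r ^ 2)) - Real.exp (-(π * lm * u ^ 2))))
      = lj / (lj + κ ^ 2 * lm) - lj ^ 2 / (lj + lm) ^ 2 :=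
  stmt_1_general lj lm κ hlj hlm hκ0
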